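/- Let L be a commutative unital quantale and let (X, ⟨·⟩) be a generalized L-closure space. Then X is an L-closure space (i.e., additionally A ≤ ⟨A⟩ for all A : X → L) if and only if ⟨u_x⟩(x) ≥ u for every x ∈ X. -/
import Mathlib


universe u

/-- A commutative unital quantale structure on a complete lattice `L`. -/
structure CommQuantale (L : Type u) [CompleteLattice L] : Type u where
  mul : L → L → L
  mul_comm : ∀ a b, mul a b = mul b a
  mul_assoc : ∀ a b c, mul (mul a b) c = mul a (mul b c)
  unit : L
  mul_unit : ∀ a, mul a unit = a
  mul_sSup : ∀ (a : L) (S : Set L), mul a (sSup S) = ⨆ s ∈ S, mul a s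

namespace CommQuantale

variable {L : Type u} [CompleteLattice L]

/-- The residuation `b → c`, the right adjoint of `⊗`. -/
def res (Q : CommQuantale L) (b c : L) : L := sSup {a | Q.mul a b ≤ c}

/-- `sub(A,B) = ⋀ₓ (A x → B x)` for `L`-subsets. -/
def subL (Q : CommQuantale L) {X : Type u} (A B : X → L) : L :=
  ⨅ x, Q.res (A x) (B x)

open Classical in
/-- The characteristic function `u_x`. -/
noncomputable def ux (Q : CommQuantale L) {X : Type u} (x : X) : X → L :=
  fun y => if y = x then Q.unit else ⊥

/-- `e` is an `L`-order on `P`. -/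
def IsLOrder (Q : CommQuantale L) {P : Type u} (e : P → P → L) : Prop :=
  (∀ x, Q.unit ≤ e x x) ∧
  (∀ x y z, Q.mul (e x y) (e y z) ≤ e x z) ∧
  (∀ x y, Q.unit ≤ e x y → Q.unit ≤ e y x → x = y)

/-- `D` is a directed `L`-subset of `(P, e)`. -/
def IsDirectedL (Q : CommQuantale L) {P : Type u} (e : P → P → L) (D : P → L) : Prop :=
  (Q.unit ≤ ⨆ x, D x) ∧
  (∀ x y, Q.mul (D x) (D y) ≤ ⨆ z, Q.mul (Q.mul (D z) (e x z)) (e y z))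

/-- `x₀` is the supremum `⊔A` of the `L`-subset `A`. -/
def IsSupL (Q : CommQuantale L) {P : Type u} (e : P → P → L) (A : P → L) (x₀ : P) : Prop :=
  ∀ y, e x₀ y = Q.subL A (fun x => e x y)

/-- `(P, e)` is an `L`-dcpo: every directed `L`-subset has a supremum. -/
def IsDcpoL (Q : CommQuantale L) {P : Type u} (e : P → P → L) : Prop :=
  ∀ D : P → L, Q.IsDirectedL e D → ∃ s, Q.IsSupL e D s

/-- `⇓x : P → L`, i.e. `⇓x(y) = ⋀_{D directed} (e(x, ⊔D) → ⋁_d D(d) ⊗ e(y,d))`. -/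
def wayBelow (Q : CommQuantale L) {P : Type u} (e : P → P → L) (x : P) : P → L := fun y =>
  ⨅ (D : P → L) (_ : Q.IsDirectedL e D) (s : P) (_ : Q.IsSupL e D s),
    Q.res (e x s) (⨆ d, Q.mul (D d) (e y d))

/-- `(P, e)` is a continuous `L`-dcpo. -/
def IsContinuousLDcpo (Q : CommQuantale L) {P : Type u} (e : P → P → L) : Prop :=
  Q.IsLOrder e ∧ Q.IsDcpoL e ∧
  ∀ x, Q.IsDirectedL e (Q.wayBelow e x) ∧ Q.IsSupL e (Q.wayBelow e x) x

open Classical in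
/-- `k(x)(y) = e(y,x)` if `y` is compact (i.e. `u ≤ ⇓y(y)`), else `0`. -/
noncomputable def kfun (Q : CommQuantale L) {P : Type u} (e : P → P → L) (x : P) : P → L :=
  fun y => if Q.unit ≤ Q.wayBelow e y y then e y x else ⊥

/-- `(P, e)` is an algebraic `L`-dcpo. -/
noncomputable def IsAlgebraicLDcpo (Q : CommQuantale L) {P : Type u} (e : P → P → L) : Prop :=
  Q.IsLOrder e ∧ Q.IsDcpoL e ∧
  ∀ x, Q.IsDirectedL e (Q.kfun e x) ∧ Q.IsSupL e (Q.kfun e x) x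

/-- `cl` is a generalized `L`-closure operator: (GC1) and (GC2). -/
def IsGenClosure (Q : CommQuantale L) {X : Type u} (cl : (X → L) → (X → L)) : Prop :=
  (∀ A B, Q.subL A B ≤ Q.subL (cl A) (cl B)) ∧
  (∀ A, cl (cl A) ≤ cl A)

/-- Interpolation conditions (IT1)-(IT3). -/
noncomputable def IsInterpolative (Q : CommQuantale L) {X : Type u}
    (cl : (X → L) → (X → L)) : Prop :=
  (∀ x, Q.unit ≤ ⨆ t, cl (Q.ux x) t) ∧
  (∀ x y, cl (Q.ux x) y ≤ ⨆ t, Q.mul (cl (Q.ux x) t) (cl (Q.ux t) y)) ∧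
  (∀ x a b, Q.mul (cl (Q.ux x) a) (cl (Q.ux x) b) ≤
    ⨆ t, Q.mul (Q.mul (cl (Q.ux x) t) (cl (Q.ux t) a)) (cl (Q.ux t) b))

/-- `U` is a directed closed set: (DC1)-(DC4). -/
noncomputable def IsDirClosed (Q : CommQuantale L) {X : Type u}
    (cl : (X → L) → (X → L)) (U : X → L) : Prop :=
  (Q.unit ≤ ⨆ x, U x) ∧
  (∀ x, U x ≤ Q.subL (cl (Q.ux x)) U) ∧
  (∀ x, U x ≤ ⨆ y, Q.mul (U y) (cl (Q.ux y) x)) ∧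
  (∀ x y, Q.mul (U x) (U y) ≤
    ⨆ z, Q.mul (Q.mul (U z) (cl (Q.ux z) x)) (cl (Q.ux z) y))

variable {Q : CommQuantale L}

lemma mul_bot' (a : L) : Q.mul a ⊥ = ⊥ := by
  have h := Q.mul_sSup a ∅
  simpa using h

lemma mul_mono_right {a b c : L} (h : b ≤ c) : Q.mul a b ≤ Q.mul a c := by
  have hs : sSup ({b, c} : Set L) = c := by
    rw [sSup_pair]; exact sup_eq_right.mpr h
  have := Q.mul_sSup a {b, c}
  rw [hs] at this
  rw [this]
  exact le_biSup _ (by simp)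

lemma mul_res_le (b c : L) : Q.mul (Q.res b c) b ≤ c := by
  rw [Q.mul_comm]
  unfold CommQuantale.res
  rw [Q.mul_sSup]
  apply iSup_le; intro s; apply iSup_le; intro hs
  rw [Q.mul_comm]; exact hs

lemma le_res {a b c : L} (h : Q.mul a b ≤ c) : a ≤ Q.res b c := le_sSup h

end CommQuantale
open CommQuantale in
/-- A generalized L-closure space is an L-closure space
(i.e. A ≤ ⟨A⟩ for all A) iff ⟨u_x⟩(x) ≥ u for every x. -/
theorem stmt11 {L X : Type u} [CompleteLattice L] (Q : CommQuantale L)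
    (cl : (X → L) → (X → L)) (hgc : Q.IsGenClosure cl) :
    (∀ A : X → L, A ≤ cl A) ↔ (∀ x : X, Q.unit ≤ cl (Q.ux x) x) := by
  constructor
  · intro h x
    have := h (Q.ux x) x
    simpa [CommQuantale.ux] using this
  · intro h A x
    -- A x ≤ subL (ux x) A
    have h1 : A x ≤ Q.subL (Q.ux x) A := by
      apply le_iInf; intro y
      by_cases hy : y = x
      · subst hy
        apply le_res
        simp [CommQuantale.ux, Q.mul_unit]
      · apply le_res
        simp [CommQuantale.ux, hy, mul_bot']
    have h2 : Q.subL (Q.ux x) A ≤ Q.res (cl (Q.ux x) x) (cl A x) :=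
      le_trans (hgc.1 (Q.ux x) A) (iInf_le _ x)
    have h3 : Q.mul (A x) (cl (Q.ux x) x) ≤ cl A x := by
      calc Q.mul (A x) (cl (Q.ux x) x)
          ≤ Q.mul (Q.res (cl (Q.ux x) x) (cl A x)) (cl (Q.ux x) x) := by
            rw [Q.mul_comm, Q.mul_comm (Q.res _ _)]
            exact mul_mono_right (le_trans h1 h2)
        _ ≤ cl A x := mul_res_le _ _
    calc A x = Q.mul (A x) Q.unit := (Q.mul_unit _).symm
      _ ≤ Q.mul (A x) (cl (Q.ux x) x) := mul_mono_right (h x)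
      _ ≤ cl A x := h3
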